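/- arXiv:2605.18649 — 6 statements merged into one kernel-verified Lean document; each statement's English description precedes it below -/
import Mathlib

section
/- For any n×n matrices A, X₁, …, X_{2n} over a commutative ring, ∑_{σ ∈ S_{2n}} sgn(σ) · tr(A · X_{σ(1)} ⋯ X_{σ(2n)}) = 0. -/
/-!
Rosset's proof. Over a `ℚ`-algebra `R`, let `e₀, …, e_{k-1}` be the generators of the exterior
algebra of `R^k` and `M = ∑ X_c e_c`, a matrix over that algebra. Then
`M ^ k = s_k(X) e₀ ⋯ e_{k-1}` with `s_k` the standard polynomial, so it suffices that
`M ^ (2n) = 0` for `k ≥ 2n`. Products `e_a e_b` commute, so the entries of `M²` generate a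
commutative torsion-free ring; and `tr M^(2j) = 0`, since moving the first factor `X_a e_a` of a
trace term past an odd number of generators to the back costs a sign. Over a commutative
torsion-free ring, an `n × n` matrix whose powers all have trace zero has reversed characteristic
polynomial with zero derivative, hence characteristic polynomial `X ^ n`, so `(M²) ^ n = 0`.
Generic matrices over `ℤ[x]` embed into `ℚ[x]`, which gives `s_{2n} = 0` over every commutative
ring, and the traced identity is `tr (A s_{2n}(X)) = 0`.
-/

open Polynomial Finset

theorem Finset.sum_pow_eq_sum_list_prod_ofFn {A ι : Type*} [Semiring A] [Fintype ι] (Y : ι → A)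
    (k : ℕ) : (∑ c, Y c) ^ k = ∑ f : Fin k → ι, (List.ofFn fun t => Y (f t)).prod := by
  induction k with
  | zero => simp
  | succ k ih =>
    rw [pow_succ', ih, sum_mul_sum, ← (Fin.consEquiv fun _ => ι).sum_comp, Fintype.sum_prod_type]
    simp [Fin.consEquiv, List.ofFn_succ]

theorem Fintype.sum_eq_sum_perm_of_not_injective {α M : Type*} [Fintype α] [DecidableEq α]
    [AddCommMonoid M] (g : (α → α) → M) (hg : ∀ f, ¬Function.Injective f → g f = 0) :
    ∑ f, g f = ∑ σ : Equiv.Perm α, g σ := by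
  refine ((sum_map univ ⟨_, DFunLike.coe_injective⟩ g).symm.trans ?_).symm
  refine Finset.sum_subset (subset_univ _) fun f _ hf => hg f fun hinj => hf ?_
  exact mem_map_of_mem _ (mem_univ (Equiv.ofBijective f (Finite.injective_iff_bijective.mp hinj)))

theorem mul_list_prod_eq_neg_one_pow_smul {E : Type*} [Ring E] (x : E) (l : List E)
    (h : ∀ y ∈ l, x * y = -(y * x)) : x * l.prod = (-1 : ℤ) ^ l.length • (l.prod * x) := by
  induction l with
  | nil => simp
  | cons y l ih =>
    simp only [List.forall_mem_cons] at h
    rw [List.prod_cons, ← mul_assoc, h.1, neg_mul, mul_assoc, ih h.2, mul_smul_comm,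
      List.length_cons, pow_succ, mul_neg_one, neg_smul, mul_assoc]

theorem commute_mul_of_anticomm {E : Type*} [Ring E] {x y z : E} (hy : x * y = -(y * x))
    (hz : x * z = -(z * x)) : Commute x (y * z) := by
  rw [Commute, SemiconjBy, ← mul_assoc, hy, neg_mul, mul_assoc, hz, mul_neg, neg_neg, mul_assoc]

def standardPoly {A : Type*} [Ring A] {k : ℕ} (X : Fin k → A) : A :=
  ∑ σ : Equiv.Perm (Fin k), (Equiv.Perm.sign σ : ℤ) • (List.ofFn fun i => X (σ i)).prod

theorem map_standardPoly {A B : Type*} [Ring A] [Ring B] (f : A →+* B) {k : ℕ} (X : Fin k → A) :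
    f (standardPoly X) = standardPoly fun i => f (X i) := by
  simp [standardPoly, map_list_prod, List.map_ofFn, Function.comp_def]

namespace Matrix

section TracePowers

variable {m : Type*} [Fintype m] [DecidableEq m] {S : Type*} [CommRing S]

theorem derivative_det (B : Matrix m m S[X]) :
    derivative B.det = (B.adjugate * B.map derivative).trace := by
  calc derivative B.det = ∑ i, (B.updateCol i fun a => derivative (B a i)).det := by
        simp only [det_apply, derivative_sum, Units.smul_def, zsmul_eq_mul, derivative_intCast_mul,
          derivative_prod_finset, mul_sum]
        rw [sum_comm]
        refine sum_congr rfl fun i _ => sum_congr rfl fun σ _ => ?_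
        rw [← mul_prod_erase univ _ (mem_univ i), updateCol_self, mul_comm (derivative _)]
        congr 2
        exact prod_congr rfl fun j hj => (updateCol_ne (ne_of_mem_erase hj)).symm
    _ = ∑ i, (B.adjugate *ᵥ fun a => derivative (B a i)) i := by
        simp_rw [← cramer_eq_adjugate_mulVec, cramer_apply]
    _ = (B.adjugate * B.map derivative).trace := by
        simp [trace, mulVec, dotProduct, mul_apply]

theorem charpolyRev_eq_one_of_trace_pow_eq_zero [IsAddTorsionFree S] (N : Matrix m m S)
    (hN : ∀ k, 0 < k → (N ^ k).trace = 0) : N.charpolyRev = 1 := by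
  set N' := N.map C
  set B : Matrix m m S[X] := 1 - (X : S[X]) • N'
  have hN' : ∀ k, 0 < k → (N' ^ k).trace = 0 := fun k hk => by
    rw [show N' ^ k = (N ^ k).map C from (map_pow C.mapMatrix N k).symm,
      ← AddMonoidHom.map_trace C, hN k hk, map_zero]
  -- By Jacobi's formula `(det B)' = -g 1`; and `adj B * B = det B • 1` gives `g k = X * g (k + 1)`
  -- once `tr N' ^ k = 0`, so every power of `X` divides `g 1`.
  set g : ℕ → S[X] := fun k => (B.adjugate * N' ^ k).trace
  have hadj : B.adjugate = B.det • 1 + (X : S[X]) • (B.adjugate * N') := by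
    rw [← adjugate_mul B, Matrix.mul_sub, Matrix.mul_one, Matrix.mul_smul, sub_add_cancel]
  have hshift : ∀ k, 0 < k → g k = X * g (k + 1) := fun k hk => by
    simp only [g]
    conv_lhs => rw [hadj]
    rw [Matrix.add_mul, trace_add, smul_mul, trace_smul, Matrix.one_mul, hN' k hk, smul_zero,
      zero_add, smul_mul, trace_smul, smul_eq_mul, Matrix.mul_assoc, ← pow_succ']
  have hpow : ∀ j, g 1 = X ^ j * g (j + 1) := fun j => by
    induction j with
    | zero => rw [pow_zero, one_mul]
    | succ j ih => rw [ih, hshift (j + 1) j.succ_pos, pow_succ, mul_assoc]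
  have hg : g 1 = 0 := by
    ext d
    exact X_pow_dvd_iff.mp ⟨_, hpow (d + 1)⟩ d d.lt_succ_self
  have hderiv : derivative N.charpolyRev = 0 := by
    have : B.map derivative = -N' := by
      ext i j
      by_cases hij : i = j <;> simp [B, N', hij]
    rw [charpolyRev, derivative_det, this, Matrix.mul_neg, trace_neg]
    simpa [g] using hg
  rw [eq_C_of_derivative_eq_zero hderiv, coeff_zero_eq_eval_zero, eval_charpolyRev, C_1]

theorem pow_card_eq_zero_of_trace_pow_eq_zero [IsAddTorsionFree S] (N : Matrix m m S)
    (hN : ∀ k, 0 < k → (N ^ k).trace = 0) : N ^ Fintype.card m = 0 := by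
  nontriviality S
  have hcharpoly : N.charpoly = X ^ Fintype.card m := by
    rw [← reflect_reflect (p := N.charpoly) (N := Fintype.card m), ← charpoly_natDegree_eq_dim N]
    change reflect _ N.charpoly.reverse = _
    rw [reverse_charpoly, charpolyRev_eq_one_of_trace_pow_eq_zero N hN, reflect_one]
  simpa [hcharpoly] using N.aeval_self_charpoly

open scoped IsMulCommutative in
theorem pow_card_eq_zero_of_commute_of_trace_pow_eq_zero {E : Type*} [Ring E] [IsAddTorsionFree E]
    (M : Matrix m m E) (hcomm : ∀ i j k l, Commute (M i j) (M k l))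
    (hM : ∀ k, 0 < k → (M ^ k).trace = 0) : M ^ Fintype.card m = 0 := by
  set C := Subring.closure (Set.range fun p : m × m => M p.1 p.2)
  have : IsMulCommutative C := Subring.isMulCommutative_closure <| by
    rintro _ ⟨⟨i, j⟩, rfl⟩ _ ⟨⟨k, l⟩, rfl⟩
    exact hcomm i j k l
  have : IsAddTorsionFree C := Subtype.val_injective.isAddTorsionFree C.subtype.toAddMonoidHom
  set M' : Matrix m m C := of fun i j => ⟨M i j, Subring.subset_closure ⟨(i, j), rfl⟩⟩
  have hpow : ∀ k, (M' ^ k).map C.subtype = M ^ k := fun k =>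
    (map_pow C.subtype.mapMatrix M' k)
  have hM' : ∀ k, 0 < k → (M' ^ k).trace = 0 := fun k hk => Subtype.val_injective <| by
    rw [← C.coe_subtype, AddMonoidHom.map_trace C.subtype, hpow, hM k hk, map_zero]
  rw [← hpow, pow_card_eq_zero_of_trace_pow_eq_zero M' hM', Matrix.map_zero _ (map_zero _)]

end TracePowers

section MapSMul

variable {m : Type*} [Fintype m] {R E : Type*} [CommRing R] [Ring E] [Algebra R E]

theorem map_smul_mul_map_smul (A B : Matrix m m R) (x y : E) :
    A.map (· • x) * B.map (· • y) = (A * B).map (· • (x * y)) := by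
  ext i j
  simp only [mul_apply, map_apply, smul_mul_smul_comm, sum_smul]

theorem trace_map_smul (A : Matrix m m R) (x : E) : (A.map (· • x)).trace = A.trace • x := by
  simp [trace, sum_smul]

theorem trace_map_smul_mul_map_smul_of_anticomm (A B : Matrix m m R) {x y : E}
    (h : x * y = -(y * x)) :
    (A.map (· • x) * B.map (· • y)).trace = -(B.map (· • y) * A.map (· • x)).trace := by
  rw [map_smul_mul_map_smul, map_smul_mul_map_smul, trace_map_smul, trace_map_smul, h,
    trace_mul_comm, smul_neg]

theorem list_prod_ofFn_map_smul [DecidableEq m] {k : ℕ} (A : Fin k → Matrix m m R)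
    (x : Fin k → E) : (List.ofFn fun t => (A t).map (· • x t)).prod =
      (List.ofFn A).prod.map (· • (List.ofFn x).prod) := by
  induction k with
  | zero => simp [Matrix.map_one]
  | succ k ih => simp [List.ofFn_succ, ih, map_smul_mul_map_smul]

end MapSMul

section Rosset

variable {m ι : Type*} [Fintype m] [DecidableEq m] [Fintype ι] {R E : Type*} [CommRing R] [Ring E]
  [Algebra R E] (X : ι → Matrix m m R) (e : ι → E)

theorem sum_map_smul_pow (k : ℕ) :
    (∑ c, (X c).map (· • e c)) ^ k = ∑ f : Fin k → ι,
      (List.ofFn fun t => X (f t)).prod.map (· • (List.ofFn fun t => e (f t)).prod) := by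
  simp_rw [Finset.sum_pow_eq_sum_list_prod_ofFn, list_prod_ofFn_map_smul]

theorem trace_sum_map_smul_pow_eq_zero [IsAddTorsionFree E] (he : ∀ a b, e a * e b = -(e b * e a))
    {k : ℕ} (hk : Even k) (hk0 : k ≠ 0) : ((∑ c, (X c).map (· • e c)) ^ k).trace = 0 := by
  obtain ⟨l, rfl⟩ : ∃ l, k = l + 1 := Nat.exists_eq_succ_of_ne_zero hk0
  have hl : Odd l := by simpa [Nat.even_add_one] using hk
  set M := ∑ c, (X c).map (· • e c)
  set w : (Fin l → ι) → E := fun f => (List.ofFn fun t => e (f t)).prod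
  have hanti : ∀ a f, e a * w f = -(w f * e a) := fun a f => by
    have : ∀ y ∈ List.ofFn fun t => e (f t), e a * y = -(y * e a) := by
      simp only [List.mem_ofFn, forall_exists_index, forall_apply_eq_imp_iff]
      exact fun t => he a (f t)
    rw [mul_list_prod_eq_neg_one_pow_smul _ _ this, List.length_ofFn, hl.neg_one_pow,
      neg_one_zsmul]
  have hswap : (M * M ^ l).trace = -(M ^ l * M).trace := by
    simp only [M, sum_map_smul_pow, sum_mul, mul_sum, trace_sum, ← sum_neg_distrib]
    rw [sum_comm]
    exact sum_congr rfl fun a _ => sum_congr rfl fun f _ =>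
      trace_map_smul_mul_map_smul_of_anticomm _ _ (hanti a f)
  rw [← pow_succ', ← pow_succ] at hswap
  have h2 : (2 : ℕ) • (M ^ (l + 1)).trace = 0 := by
    rw [two_nsmul]
    nth_rw 1 [hswap]
    exact neg_add_cancel _
  exact (smul_eq_zero.mp h2).resolve_left two_ne_zero

theorem sum_map_smul_pow_two_mul_card_eq_zero [IsAddTorsionFree E]
    (he : ∀ a b, e a * e b = -(e b * e a)) :
    (∑ c, (X c).map (· • e c)) ^ (2 * Fintype.card m) = 0 := by
  have hcomm : ∀ f g : Fin 2 → ι, Commute (List.ofFn fun t => e (f t)).prod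
      (List.ofFn fun t => e (g t)).prod := fun f g => by
    simp only [List.ofFn_succ, List.ofFn_zero, List.prod_cons, List.prod_nil, mul_one]
    exact (commute_mul_of_anticomm (he _ _) (he _ _)).mul_left
      (commute_mul_of_anticomm (he _ _) (he _ _))
  rw [pow_mul]
  refine pow_card_eq_zero_of_commute_of_trace_pow_eq_zero _ (fun i j k l => ?_) fun k hk => ?_
  · simp only [sum_map_smul_pow, sum_apply, map_apply]
    exact .sum_left _ _ _ fun f _ => .sum_right _ _ _ fun g _ =>
      ((hcomm f g).smul_left _).smul_right _
  · rw [← pow_mul]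
    exact trace_sum_map_smul_pow_eq_zero X e he (even_two_mul k) (by omega)

end Rosset

variable {m : Type*} [Fintype m] [DecidableEq m] {R : Type*} [CommRing R]

theorem standardPoly_eq_zero_of_algebra_rat [Algebra ℚ R] {k : ℕ} (hk : 2 * Fintype.card m ≤ k)
    (X : Fin k → Matrix m m R) : standardPoly X = 0 := by
  set v := Pi.basisFun R (Fin k)
  set e : Fin k → ExteriorAlgebra R (Fin k → R) := fun c => ExteriorAlgebra.ι R (v c)
  have he : ∀ a b, e a * e b = -(e b * e a) := fun a b =>
    eq_neg_of_add_eq_zero_left (ExteriorAlgebra.ι_add_mul_swap _ _)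
  have : IsAddTorsionFree (ExteriorAlgebra R (Fin k → R)) := .of_module_rat _
  have hword : ∀ f : Fin k → Fin k,
      (List.ofFn fun t => e (f t)).prod = ExteriorAlgebra.ιMulti R k (v ∘ f) := fun f => by
    rw [ExteriorAlgebra.ιMulti_apply]; rfl
  have hpow : (∑ c, (X c).map (· • e c)) ^ k = 0 := by
    obtain ⟨j, rfl⟩ := Nat.exists_eq_add_of_le hk
    rw [pow_add, sum_map_smul_pow_two_mul_card_eq_zero X e he, zero_mul]
  rw [sum_map_smul_pow, Fintype.sum_eq_sum_perm_of_not_injective] at hpow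
  swap
  · intro f hf
    rw [hword, AlternatingMap.map_eq_zero_of_not_injective _ _ fun h => hf h.of_comp]
    ext
    simp
  have hperm : ∀ σ : Equiv.Perm (Fin k),
      (List.ofFn fun t => e (σ t)).prod = (Equiv.Perm.sign σ : ℤ) • ExteriorAlgebra.ιMulti R k v :=
    fun σ => by rw [hword, AlternatingMap.map_perm, Units.smul_def]
  -- `φ` reads off the coefficient of `e 0 * ⋯ * e (k - 1)`.
  set φ := ExteriorAlgebra.liftAlternating (R := R) (Pi.single k v.det)
  have hφ : φ (ExteriorAlgebra.ιMulti R k v) = 1 := by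
    rw [ExteriorAlgebra.liftAlternating_apply_ιMulti, Pi.single_eq_same, Module.Basis.det_self]
  ext i j
  have hentry := congrArg (fun M => φ (M i j)) hpow
  simp only [sum_apply, map_apply, hperm, map_sum, map_smul, map_zsmul, hφ, zero_apply, map_zero,
    smul_eq_mul] at hentry
  rw [standardPoly, sum_apply, zero_apply, ← hentry]
  exact sum_congr rfl fun σ _ => by rw [smul_apply, zsmul_eq_mul, zsmul_eq_mul, mul_one, mul_comm]

theorem standardPoly_eq_zero {k : ℕ} (hk : 2 * Fintype.card m ≤ k) (X : Fin k → Matrix m m R) :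
    standardPoly X = 0 := by
  let Xgen : Fin k → Matrix m m (MvPolynomial (Fin k × m × m) ℤ) :=
    fun c => of fun i j => MvPolynomial.X (c, i, j)
  have hgen : standardPoly Xgen = 0 := by
    let toRat := (MvPolynomial.map (σ := Fin k × m × m) (Int.castRingHom ℚ)).mapMatrix (m := m)
    refine map_injective (MvPolynomial.map_injective (Int.castRingHom ℚ) Int.cast_injective) ?_
    change toRat (standardPoly Xgen) = toRat 0
    rw [map_standardPoly, standardPoly_eq_zero_of_algebra_rat hk, map_zero]
  let eval := (MvPolynomial.eval₂Hom (Int.castRingHom R)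
    fun p : Fin k × m × m => X p.1 p.2.1 p.2.2).mapMatrix (m := m)
  have hX : X = fun c => eval (Xgen c) := by
    ext c i j
    simp [eval, Xgen]
  rw [hX, ← map_standardPoly, hgen, map_zero]

end Matrix

/-- Traced Amitsur–Levitzki identity: for `n × n` matrices `A, X₁, …, X_{2n}`,
`∑_{σ ∈ S_{2n}} sgn(σ) · tr(A · X_{σ(1)} ⋯ X_{σ(2n)}) = 0`. -/
theorem traced_amitsur_levitzki {R : Type*} [CommRing R] (n : ℕ)
    (A : Matrix (Fin n) (Fin n) R) (X : Fin (2 * n) → Matrix (Fin n) (Fin n) R) :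
    ∑ σ : Equiv.Perm (Fin (2 * n)),
      (Equiv.Perm.sign σ : ℤ) • (A * (List.ofFn fun i => X (σ i)).prod).trace = 0 := by
  have h := congrArg (fun S => (A * S).trace) (Matrix.standardPoly_eq_zero (by simp) X)
  simpa only [standardPoly, Matrix.mul_sum, Matrix.trace_sum, Matrix.mul_smul, Matrix.trace_smul,
    Matrix.mul_zero, Matrix.trace_zero] using h
end

section
/- In the free group F on two generators a, b, for any m ≥ 1 and any two permutations σ, τ of {1,…,m}, if the words W_σ = a·(b^{σ(1)}a)·(b^{σ(2)}a)⋯(b^{σ(m)}a) and W_τ = a·(b^{τ(1)}a)⋯(b^{τ(m)}a) are conjugate in F, then σ = τ. -/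
namespace WSigmaAux

/-- Wreath-product-like group: `(ZMod n → ℤ) ⋊ ZMod n`. -/
@[ext] structure Wr (n : ℕ) where
  f : ZMod n → ℤ
  k : ZMod n

variable {n : ℕ}

instance : Group (Wr n) where
  mul x y := ⟨fun j => x.f j + y.f (j + x.k), x.k + y.k⟩
  one := ⟨0, 0⟩
  inv x := ⟨fun j => -x.f (j - x.k), -x.k⟩
  mul_assoc x y z := by
    refine Wr.ext (funext fun j => ?_) (add_assoc _ _ _)
    show x.f j + y.f (j + x.k) + z.f (j + (x.k + y.k))
        = x.f j + (y.f (j + x.k) + z.f (j + x.k + y.k))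
    rw [add_assoc, add_assoc]
  one_mul x := by
    refine Wr.ext (funext fun j => ?_) (zero_add _)
    show (0 : ℤ) + x.f (j + 0) = x.f j
    rw [add_zero, zero_add]
  mul_one x := by
    refine Wr.ext (funext fun j => ?_) (add_zero _)
    show x.f j + (0 : ZMod n → ℤ) (j + x.k) = x.f j
    simp
  inv_mul_cancel x := by
    refine Wr.ext (funext fun j => ?_) (neg_add_cancel _)
    show -x.f (j - x.k) + x.f (j + -x.k) = (0 : ZMod n → ℤ) j
    rw [← sub_eq_add_neg]
    exact neg_add_cancel _

lemma mul_def (x y : Wr n) :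
    x * y = ⟨fun j => x.f j + y.f (j + x.k), x.k + y.k⟩ := rfl
lemma one_def : (1 : Wr n) = ⟨0, 0⟩ := rfl
lemma inv_def (x : Wr n) : x⁻¹ = ⟨fun j => -x.f (j - x.k), -x.k⟩ := rfl

/-- The image of `a`. -/
def A : Wr n := ⟨0, 1⟩
/-- The image of `b`. -/
def B : Wr n := ⟨fun j => if j = 0 then 1 else 0, 0⟩

lemma B_pow (e : ℕ) : (B ^ e : Wr n) = ⟨fun j => if j = 0 then (e : ℤ) else 0, 0⟩ := by
  induction e with
  | zero =>
      rw [pow_zero, one_def]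
      exact Wr.ext (funext fun j => by simp) rfl
  | succ e ih =>
      rw [pow_succ, ih, mul_def]
      refine Wr.ext (funext fun j => ?_) (by simp [B])
      by_cases hj : j = 0 <;> simp [B, hj]

/-- The function part of the image of `(b^{e₁} a)(b^{e₂} a)⋯`. -/
def Fl : List ℕ → ZMod n → ℤ
  | [], _ => 0
  | e :: t, j => (if j = 0 then (e : ℤ) else 0) + Fl t (j + 1)

lemma prod_map (l : List ℕ) :
    ((l.map fun e => (B : Wr n) ^ e * A).prod) = ⟨Fl l, (l.length : ZMod n)⟩ := by
  induction l with
  | nil =>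
      rw [List.map_nil, List.prod_nil, one_def]
      exact Wr.ext (funext fun j => by simp [Fl]) (by simp)
  | cons e t ih =>
      rw [List.map_cons, List.prod_cons, ih, B_pow]
      refine Wr.ext (funext fun j => ?_) ?_
      · simp [mul_def, A, Fl]
      · simp only [mul_def, A]
        rw [List.length_cons]
        push_cast
        ring

lemma Fl_closed (l : List ℕ) (j : ZMod n) :
    Fl l j = ∑ i ∈ Finset.range l.length,
      (if j + (i : ℕ) = 0 then (l.getD i 0 : ℤ) else 0) := by
  induction l generalizing j with
  | nil => simp [Fl]
  | cons e t ih =>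
      rw [Fl, ih]
      rw [List.length_cons, Finset.sum_range_succ']
      simp only [List.getD_cons_succ, List.getD_cons_zero]
      rw [add_comm]
      congr 1
      · refine Finset.sum_congr rfl fun i _ => ?_
        congr 2
        push_cast
        ring
      · simp

end WSigmaAux

open WSigmaAux
/-- In the free group on two generators `a, b`, the words
`W_σ = a·(b^{σ(1)}a)·(b^{σ(2)}a)⋯(b^{σ(m)}a)` for permutations `σ` of `{1,…,m}`
are pairwise non-conjugate. -/
theorem W_sigma_pairwise_nonconjugate (m : ℕ) (hm : 1 ≤ m)
    (σ τ : Equiv.Perm (Fin m))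
    (a b : FreeGroup (Fin 2)) (ha : a = FreeGroup.of 0) (hb : b = FreeGroup.of 1)
    (h : IsConj (a * (List.ofFn fun i => b ^ ((σ i : ℕ) + 1) * a).prod)
                (a * (List.ofFn fun i => b ^ ((τ i : ℕ) + 1) * a).prod)) :
    σ = τ := by
  set n := m + 1 with hn
  haveI : NeZero n := ⟨by omega⟩
  -- the homomorphism
  set φ : FreeGroup (Fin 2) →* Wr n := FreeGroup.lift (fun i => if i = 0 then A else B) with hφ
  have hφa : φ a = A := by rw [ha, hφ, FreeGroup.lift_apply_of]; simp
  have hφb : φ b = B := by rw [hb, hφ, FreeGroup.lift_apply_of]; simp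
  -- image of a word
  have key : ∀ ρ : Equiv.Perm (Fin m),
      φ (a * (List.ofFn fun i => b ^ ((ρ i : ℕ) + 1) * a).prod)
        = ⟨fun j => Fl (List.ofFn fun i => (ρ i : ℕ) + 1) (j + 1), 0⟩ := by
    intro ρ
    rw [map_mul, map_list_prod, hφa]
    have h1 : (List.ofFn fun i => b ^ ((ρ i : ℕ) + 1) * a).map φ
        = (List.ofFn fun i : Fin m => (ρ i : ℕ) + 1).map (fun e => (B : Wr n) ^ e * A) := by
      rw [List.map_ofFn, List.map_ofFn]
      congr 1
      funext i
      simp [Function.comp, map_mul, map_pow, hφa, hφb]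
    rw [h1, prod_map]
    have hmn : (1 : ZMod n) + ((List.ofFn fun i : Fin m => (ρ i : ℕ) + 1).length : ℕ) = 0 := by
      rw [List.length_ofFn]
      have h2 : ((n : ℕ) : ZMod n) = 0 := ZMod.natCast_self n
      rw [hn] at h2
      push_cast at h2
      linear_combination h2
    rw [mul_def]
    refine Wr.ext (funext fun j => ?_) ?_
    · show (0 : ZMod n → ℤ) j + Fl _ (j + 1) = Fl _ (j + 1)
      simp [A]
    · exact hmn
  -- evaluation of Fl for permutation lists
  have heval : ∀ (ρ : Equiv.Perm (Fin m)) (i : Fin m),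
      Fl (n := n) (List.ofFn fun i => (ρ i : ℕ) + 1) (-(((i : ℕ) : ZMod n) + 1) + 1)
        = (ρ i : ℕ) + 1 := by
    intro ρ i
    rw [Fl_closed, List.length_ofFn]
    rw [Finset.sum_eq_single (i : ℕ)]
    · have hcond : (-(((i : ℕ) : ZMod n) + 1) + 1 + ((i : ℕ) : ZMod n) = 0) := by ring
      rw [if_pos hcond]
      have hlt : (i : ℕ) < m := i.isLt
      simp [List.getD_eq_getElem?_getD, List.getElem?_ofFn, hlt]
    · intro i' hi' hne
      have hi'm : i' < m := Finset.mem_range.mp hi'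
      rw [if_neg]
      intro hcon
      have hcast : ((i' : ℕ) : ZMod n) = ((i : ℕ) : ZMod n) := by linear_combination hcon
      apply hne
      have h3 := congrArg ZMod.val hcast
      rwa [ZMod.val_cast_of_lt (by omega), ZMod.val_cast_of_lt (by omega)] at h3
    · intro hcon
      exact absurd (Finset.mem_range.mpr i.isLt) hcon
  -- Fl at 0+1 is 0
  have hzero : ∀ (ρ : Equiv.Perm (Fin m)),
      Fl (n := n) (List.ofFn fun i => (ρ i : ℕ) + 1) ((0 : ZMod n) + 1) = 0 := by
    intro ρ
    rw [Fl_closed]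
    refine Finset.sum_eq_zero fun i hi => ?_
    rw [List.length_ofFn] at hi
    have him : i < m := Finset.mem_range.mp hi
    rw [if_neg]
    intro hcon
    have h4 : (((1 + i : ℕ)) : ZMod n) = 0 := by push_cast; linear_combination hcon
    rw [ZMod.natCast_eq_zero_iff] at h4
    have h5 := Nat.le_of_dvd (by omega) h4
    omega
  -- transport conjugacy
  have h2 : IsConj (φ (a * (List.ofFn fun i => b ^ ((σ i : ℕ) + 1) * a).prod))
      (φ (a * (List.ofFn fun i => b ^ ((τ i : ℕ) + 1) * a).prod)) := φ.map_isConj h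
  rw [key σ, key τ, isConj_iff] at h2
  obtain ⟨c, hc⟩ := h2
  -- unpack the conjugation equation
  set gσ : ZMod n → ℤ := fun j => Fl (List.ofFn fun i => (σ i : ℕ) + 1) (j + 1) with hgσ
  set gτ : ZMod n → ℤ := fun j => Fl (List.ofFn fun i => (τ i : ℕ) + 1) (j + 1) with hgτ
  have hfun : ∀ j : ZMod n, gσ (j + c.k) = gτ j := by
    intro j
    have h5 := congrFun (congrArg Wr.f hc) j
    simp only [mul_def, inv_def, add_zero, add_sub_cancel_right] at h5
    linear_combination h5
  -- show c.k = 0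
  have hk : c.k = 0 := by
    by_contra hk
    have hvne : (-c.k).val ≠ 0 := by
      intro h0
      exact hk (neg_eq_zero.mp ((ZMod.val_eq_zero _).mp h0))
    have hvlt : (-c.k).val < n := ZMod.val_lt _
    set i : ℕ := (-c.k).val - 1 with hi
    have him : i < m := by omega
    have hc2 : c.k = -(((i : ℕ) : ZMod n) + 1) := by
      have h6 : ((i + 1 : ℕ) : ZMod n) = -c.k := by
        rw [show i + 1 = (-c.k).val by omega]
        exact ZMod.natCast_rightInverse (-c.k)
      push_cast at h6
      linear_combination h6
    have hA := hfun 0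
    rw [zero_add, hc2] at hA
    have h0 : gτ 0 = 0 := hzero τ
    have he : gσ (-(((i : ℕ) : ZMod n) + 1)) = ((σ ⟨i, him⟩ : ℕ) : ℤ) + 1 :=
      heval σ ⟨i, him⟩
    rw [h0] at hA
    rw [he] at hA
    omega
  -- now gσ = gτ, conclude
  ext i
  have h1 := hfun (-(((i : ℕ) : ZMod n) + 1))
  rw [hk, add_zero] at h1
  have e1 : gσ (-(((i : ℕ) : ZMod n) + 1)) = ((σ i : ℕ) : ℤ) + 1 := heval σ i
  have e2 : gτ (-(((i : ℕ) : ZMod n) + 1)) = ((τ i : ℕ) : ℤ) + 1 := heval τ i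
  rw [e1, e2] at h1
  have hnat : (σ i : ℕ) = (τ i : ℕ) := by omega
  exact hnat
end

section
/- In a free group, two cyclically reduced words are conjugate if and only if one is a cyclic permutation (cyclic rotation) of the other. -/
/-!
Write `y = g⁻¹ x g` with `g = z w` reduced and `z` a letter. Conjugating `x` by `z` alone either
moves the first letter of `x` to its end (when `z` is that letter), or moves the last letter of `x`
to its front (when `z` cancels it); otherwise nothing cancels in `g⁻¹ x g`, whose reduced word then
begins with the inverse of its last letter, so `y` would not be cyclically reduced. Rotations of a
cyclically reduced word are cyclically reduced, so induction on the length of `g` applies.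
Conversely, the rotation `B A` of `A B` is its conjugate by `A`.
-/

/-- An element of a free group is cyclically reduced if the first letter of its
reduced word is not the inverse of the last letter. -/
def CyclicallyReduced {α : Type*} [DecidableEq α] (x : FreeGroup α) : Prop :=
  ∀ f l : α × Bool, x.toWord.head? = some f → x.toWord.getLast? = some l →
    f ≠ (l.1, !l.2)

namespace FreeGroup
variable {α : Type*}

theorem ne_inverse_letter_iff (a b : α × Bool) : b ≠ (a.1, !a.2) ↔ (a.1 = b.1 → a.2 = b.2) := by
  obtain ⟨a₁, _ | _⟩ := a <;> obtain ⟨b₁, _ | _⟩ := b <;> simp [eq_comm]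

theorem IsCyclicallyReduced.append_singleton {a : α × Bool} {L : List (α × Bool)}
    (h : IsCyclicallyReduced (a :: L)) : IsCyclicallyReduced (L ++ [a]) := by
  rcases L.eq_nil_or_concat' with rfl | ⟨M, b, rfl⟩
  · exact .singleton
  obtain ⟨hred, hba⟩ := isCyclicallyReduced_cons_append_iff.mp h
  refine ⟨hred.tail.append (.singleton a) (by simpa using hba), fun x hx y hy => ?_⟩
  rw [List.getLast?_concat, Option.mem_some_iff] at hx
  subst hx
  rw [List.head?_append_of_ne_nil _ (by simp)] at hy
  exact hred.rel_head? hy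

theorem IsCyclicallyReduced.rotate {L : List (α × Bool)} (h : IsCyclicallyReduced L) (n : ℕ) :
    IsCyclicallyReduced (L.rotate n) := by
  induction n generalizing L with
  | zero => simpa
  | succ n ih =>
    rcases L with _ | ⟨a, L⟩
    · simp
    · rw [List.rotate_cons_succ]
      exact ih h.append_singleton

theorem IsReduced.invRev {L : List (α × Bool)} (h : IsReduced L) : IsReduced (invRev L) := by
  simpa [IsReduced, FreeGroup.invRev, List.isChain_reverse, List.isChain_map, flip, eq_comm]
    using h

theorem not_isCyclicallyReduced_invRev_append_append {G : List (α × Bool)} (hG : G ≠ [])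
    (M : List (α × Bool)) : ¬ IsCyclicallyReduced (invRev G ++ M ++ G) := by
  obtain ⟨G, b, rfl⟩ := (G.eq_nil_or_concat').resolve_left hG
  intro h
  simpa using h.2 b (by simp) (b.1, !b.2) (by simp [invRev])

theorem conj_mk_cons (a : α × Bool) (L : List (α × Bool)) :
    (mk [a])⁻¹ * mk (a :: L) * mk [a] = mk (L ++ [a]) := by
  change _ * mk ([a] ++ L) * _ = _
  rw [← mul_mk, ← mul_mk, inv_mul_cancel_left]

theorem conj_mk_append_singleton (L : List (α × Bool)) (a : α × Bool) :
    mk [a] * mk (L ++ [a]) * (mk [a])⁻¹ = mk (a :: L) := by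
  rw [← mul_mk, ← mul_assoc, mul_inv_cancel_right, mul_mk, List.singleton_append]

theorem isConj_mk_rotate (L : List (α × Bool)) (n : ℕ) : IsConj (mk L) (mk (L.rotate n)) := by
  induction n generalizing L with
  | zero => rw [List.rotate_zero]
  | succ n ih =>
    rcases L with _ | ⟨a, L⟩
    · rfl
    · rw [List.rotate_cons_succ]
      exact (isConj_iff.mpr ⟨(mk [a])⁻¹, by rw [inv_inv, conj_mk_cons]⟩).trans (ih _)

variable [DecidableEq α]

theorem IsReduced.toWord_mk {L : List (α × Bool)} (h : IsReduced L) : (mk L).toWord = L := by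
  rw [FreeGroup.toWord_mk, h.reduce_eq]

theorem exists_rotate_of_conj_singleton {z : α × Bool} {w X : List (α × Bool)}
    (hG : IsReduced (z :: w)) (hX : IsCyclicallyReduced X)
    (hY : IsCyclicallyReduced ((mk (z :: w))⁻¹ * mk X * mk (z :: w)).toWord) :
    ∃ j, ((mk [z])⁻¹ * mk X * mk [z]).toWord = X.rotate j := by
  rcases eq_or_ne X [] with rfl | hX0
  · exact ⟨0, by rw [← one_eq_mk, mul_one, inv_mul_cancel, toWord_one, List.rotate_zero]⟩
  by_cases hu : z ∈ X.head?
  · obtain ⟨us, rfl⟩ := List.head?_eq_some_iff.mp hu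
    refine ⟨1, ?_⟩
    rw [conj_mk_cons, List.rotate_cons_succ, List.rotate_zero,
      hX.append_singleton.isReduced.toWord_mk]
  by_cases hl : ∃ l ∈ X.getLast?, z = (l.1, !l.2)
  · obtain ⟨l, hl, rfl⟩ := hl
    obtain ⟨F, rfl⟩ := List.getLast?_eq_some_iff.mp hl
    have hz : mk [(l.1, !l.2)] = (mk [l])⁻¹ := by simp [inv_mk, invRev]
    refine ⟨F.length, ?_⟩
    have hrot := hX.rotate F.length
    rw [List.rotate_append_length_eq] at hrot ⊢
    rw [hz, inv_inv, conj_mk_append_singleton]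
    exact hrot.isReduced.toWord_mk
  exfalso
  have hreduced : IsReduced (invRev (z :: w) ++ X ++ z :: w) := by
    refine (hG.invRev.append hX.isReduced ?_).append hG ?_
    · intro a ha b hb
      obtain rfl : a = (z.1, !z.2) := by simpa [invRev] using ha.symm
      exact (ne_inverse_letter_iff _ b).mp fun h => hu (by simpa [h] using hb)
    · intro a ha b hb
      rw [List.getLast?_append_of_ne_nil _ hX0] at ha
      obtain rfl : b = z := by simpa using hb.symm
      exact (ne_inverse_letter_iff a b).mp fun h => hl ⟨a, ha, h⟩
  apply not_isCyclicallyReduced_invRev_append_append (List.cons_ne_nil z w) X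
  rwa [← hreduced.toWord_mk, ← mul_mk, ← mul_mk, ← inv_mk]

theorem exists_rotate_of_conj {G X : List (α × Bool)} (hG : IsReduced G)
    (hX : IsCyclicallyReduced X) (hY : IsCyclicallyReduced ((mk G)⁻¹ * mk X * mk G).toWord) :
    ∃ k, ((mk G)⁻¹ * mk X * mk G).toWord = X.rotate k := by
  induction G generalizing X with
  | nil => exact ⟨0, by simp [← one_eq_mk, hX.isReduced.toWord_mk]⟩
  | cons z w ih =>
    obtain ⟨j, hj⟩ := exists_rotate_of_conj_singleton hG hX hY
    have hconj : (mk (z :: w))⁻¹ * mk X * mk (z :: w) = (mk w)⁻¹ * mk (X.rotate j) * mk w := by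
      rw [← hj, mk_toWord, ← List.singleton_append, ← mul_mk]; group
    rw [hconj] at hY ⊢
    obtain ⟨k, hk⟩ := ih hG.tail (hX.rotate j) hY
    exact ⟨j + k, by rw [hk, List.rotate_rotate]⟩

end FreeGroup

theorem cyclicallyReduced_iff_isCyclicallyReduced_toWord {α : Type*} [DecidableEq α]
    {x : FreeGroup α} : CyclicallyReduced x ↔ FreeGroup.IsCyclicallyReduced x.toWord := by
  simp only [CyclicallyReduced, FreeGroup.IsCyclicallyReduced, FreeGroup.isReduced_toWord,
    true_and, Option.mem_def, FreeGroup.ne_inverse_letter_iff]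
  exact ⟨fun h l hl f hf => h f l hf hl, fun h f l hf hl => h l hl f hf⟩

/-- In a free group, two cyclically reduced words are conjugate if and only if
one is a cyclic rotation of the other. -/
theorem conj_iff_cyclic_rotation {α : Type*} [DecidableEq α]
    (x y : FreeGroup α) (hx : CyclicallyReduced x) (hy : CyclicallyReduced y) :
    IsConj x y ↔ ∃ k : ℕ, y.toWord = x.toWord.rotate k := by
  rw [cyclicallyReduced_iff_isCyclicallyReduced_toWord] at hx hy
  constructor
  · intro hxy
    obtain ⟨c, rfl⟩ := isConj_iff.mp hxy
    have hconj : (FreeGroup.mk c⁻¹.toWord)⁻¹ * FreeGroup.mk x.toWord * FreeGroup.mk c⁻¹.toWord =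
        c * x * c⁻¹ := by
      simp only [FreeGroup.mk_toWord, inv_inv]
    rw [← hconj] at hy ⊢
    exact FreeGroup.exists_rotate_of_conj FreeGroup.isReduced_toWord hx hy
  · rintro ⟨k, hk⟩
    rw [← FreeGroup.mk_toWord (x := x), ← FreeGroup.mk_toWord (x := y), hk]
    exact FreeGroup.isConj_mk_rotate _ _
end

section
/- If x and y are elements of a free group F lying in a subgroup H of F, x and y are conjugate in an overgroup G = F *_C K (amalgamated product over cyclic C ≤ F), and neither x nor y is conjugate in F into C, then x and y are conjugate in F. -/
/-!
Write a conjugator in normal form `h · a₁ ⋯ aₙ` (with `h` in the amalgamated subgroup and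
the `aₖ` alternating transversal letters) and strip letters from the left. A letter from the
factor containing `x`, or from the amalgamated subgroup, only replaces `x` by a conjugate in
that factor, which is still not conjugate into the amalgamated subgroup. The first remaining
letter cannot come from another factor: if `u = aₖ ⋯ aₙ` starts with such a letter, then
`u⁻¹ x u` is spelled by the reduced word `aₙ⁻¹ ⋯ aₖ⁻¹ x aₖ ⋯ aₙ` of length at least 3,
whereas by the normal form theorem a reduced word whose product lies in a single factor
has length at most one.
-/

namespace Monoid.PushoutI

open NormalWord

variable {ι H : Type*} {G : ι → Type*} [Group H] [∀ i, Group (G i)] {φ : ∀ i, H →* G i}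

theorem NormalWord.Transversal.notMem_range_of_mem_set {d : Transversal φ} {i : ι} {g : G i}
    (hg : g ∈ d.set i) (hg1 : g ≠ 1) : g ∉ (φ i).range := fun hr =>
  hg1 <| congrArg Subtype.val <|
    ((d.compl i).equiv_snd_eq_self_of_mem_of_one_mem (φ i).range.one_mem hg).symm.trans
      ((d.compl i).equiv_snd_eq_one_of_mem_of_one_mem (d.one_mem i) hr)

theorem ofCoprodI_word_prod (w : CoprodI.Word G) :
    ofCoprodI (φ := φ) w.prod = (w.toList.map fun l => of (φ := φ) l.1 l.2).prod := by
  simp [CoprodI.Word.prod, map_list_prod, List.map_map, Function.comp_def]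

theorem Reduced.map_fst_eq_of_prod_eq (hφ : ∀ i, Function.Injective (φ i))
    {w w' : CoprodI.Word G} (hw : Reduced φ w) (hw' : Reduced φ w')
    (h : ofCoprodI (φ := φ) w.prod = ofCoprodI w'.prod) :
    w.toList.map Sigma.fst = w'.toList.map Sigma.fst := by
  classical
  obtain ⟨d⟩ := transversal_nonempty φ hφ
  obtain ⟨v, hv, hvw⟩ := hw.exists_normalWord_prod_eq d
  obtain ⟨v', hv', hvw'⟩ := hw'.exists_normalWord_prod_eq d
  rw [← hvw, ← hvw', NormalWord.prod_injective (hv.trans (h.trans hv'.symm))]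

theorem length_le_one_of_prod_eq_of (hφ : ∀ i, Function.Injective (φ i))
    {L : List (Σ i, G i)} (hL : ∀ l ∈ L, l.2 ∉ (φ l.1).range)
    (hchain : L.IsChain fun l l' => l.1 ≠ l'.1) {j : ι} {y : G j}
    (h : (L.map fun l => of (φ := φ) l.1 l.2).prod = of j y) : L.length ≤ 1 := by
  let w : CoprodI.Word G := ⟨L, fun l hl h1 => hL l hl (h1 ▸ one_mem _), hchain⟩
  have hw_red : Reduced φ w := hL
  have hw : ofCoprodI (φ := φ) w.prod = of j y := (ofCoprodI_word_prod w).trans h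
  by_cases hy : y ∈ (φ j).range
  · obtain ⟨c, rfl⟩ := hy
    have hw_empty := hw_red.eq_empty_of_mem_range hφ ⟨c, by rw [hw, of_apply_eq_base]⟩
    simp [show L = [] from congrArg CoprodI.Word.toList hw_empty]
  · let w' : CoprodI.Word G := ⟨[⟨j, y⟩], by simpa using fun h1 : y = 1 => hy (h1 ▸ one_mem _),
      List.isChain_singleton _⟩
    have hw' : Reduced φ w' := by simpa [Reduced, w'] using hy
    have hidx := Reduced.map_fst_eq_of_prod_eq hφ hw_red hw'
      (hw.trans (by simp [ofCoprodI_word_prod, w']))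
    simpa [w', w] using (congrArg List.length hidx).le

theorem conj_prod_ne_of (hφ : ∀ i, Function.Injective (φ i))
    {T : List (Σ i, G i)} (hT : ∀ l ∈ T, l.2 ∉ (φ l.1).range)
    (hchain : T.IsChain fun l l' => l.1 ≠ l'.1) (hT_ne : T ≠ []) {i : ι}
    (hhead : ∀ l ∈ T.head?, l.1 ≠ i) {g : G i} (hg : g ∉ (φ i).range) {j : ι} (y : G j) :
    (T.map fun l => of (φ := φ) l.1 l.2).prod⁻¹ * of i g *
      (T.map fun l => of (φ := φ) l.1 l.2).prod ≠ of j y := by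
  intro h
  set L : List (Σ i, G i) := (T.map fun l => ⟨l.1, l.2⁻¹⟩).reverse ++ ⟨i, g⟩ :: T
  have hL : ∀ l ∈ L, l.2 ∉ (φ l.1).range := by
    simp only [L, List.mem_append, List.mem_reverse, List.mem_map, List.mem_cons]
    rintro l (⟨l, hl, rfl⟩ | rfl | hl)
    · simpa using hT l hl
    · exact hg
    · exact hT l hl
  have hLchain : L.IsChain fun l l' => l.1 ≠ l'.1 := by
    refine List.IsChain.append ?_ (hchain.cons fun l hl => (hhead l hl).symm) ?_
    · rw [List.isChain_reverse, List.isChain_map]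
      exact hchain.imp fun _ _ h => Ne.symm h
    · simp only [List.getLast?_reverse, List.head?_map, List.head?_cons, Option.mem_def,
        Option.map_eq_some_iff]
      rintro _ ⟨l, hl, rfl⟩ _ ⟨⟩
      exact hhead l hl
  have hLprod : (L.map fun l => of (φ := φ) l.1 l.2).prod =
      (T.map fun l => of (φ := φ) l.1 l.2).prod⁻¹ * of i g *
        (T.map fun l => of (φ := φ) l.1 l.2).prod := by
    simp [L, List.prod_inv_reverse, Function.comp_def, mul_assoc]
  have hlen := length_le_one_of_prod_eq_of hφ hL hLchain (hLprod.trans h)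
  simp only [L, List.length_append, List.length_reverse, List.length_map,
    List.length_cons] at hlen
  exact hT_ne (List.length_eq_zero_iff.mp (by omega))

theorem isConj_of_conj_of_mul_eq {i : ι} {g : PushoutI φ}
    (hg : ∀ x y : G i, (∀ c ∈ (φ i).range, ¬IsConj x c) →
      g⁻¹ * of i x * g = of i y → IsConj x y)
    (c : G i) {x y : G i} (hx : ∀ c ∈ (φ i).range, ¬IsConj x c)
    (h : (of i c * g)⁻¹ * of i x * (of i c * g) = of i y) : IsConj x y := by
  have hconj : IsConj x (c⁻¹ * x * c) := isConj_iff.2 ⟨c⁻¹, by group⟩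
  refine hconj.trans (hg _ _ (fun c' hc' h' => hx c' hc' (hconj.trans h')) ?_)
  rw [← h]
  simp only [map_mul, map_inv, mul_inv_rev]
  group

theorem isConj_of_conj_normalWord_prod_eq (hφ : ∀ i, Function.Injective (φ i))
    [DecidableEq ι] [∀ i, DecidableEq (G i)] {d : Transversal φ} (w : NormalWord d)
    {i : ι} {x y : G i} (hx : ∀ c ∈ (φ i).range, ¬IsConj x c)
    (h : w.prod⁻¹ * of i x * w.prod = of i y) : IsConj x y := by
  induction w using NormalWord.consRecOn generalizing x y with
  | empty =>
    simp only [NormalWord.prod_empty, inv_one, one_mul, mul_one] at h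
    rw [of_injective hφ i h]
  | cons j a w hmw _ hgr hw1 ih =>
    rw [NormalWord.prod_cons] at h
    by_cases hji : j = i
    · subst hji
      exact isConj_of_conj_of_mul_eq (fun _ _ => ih) a hx h
    · have hw_prod : w.prod = (w.toList.map fun l => of (φ := φ) l.1 l.2).prod := by
        rw [NormalWord.prod, hw1, map_one, one_mul, ofCoprodI_word_prod]
      have hT : ∀ l ∈ ⟨j, a⟩ :: w.toList, l.2 ∉ (φ l.1).range := by
        rintro ⟨k, b⟩ (_ | ⟨_, hl⟩)
        · exact hgr
        · exact d.notMem_range_of_mem_set (w.normalized k b hl) (w.ne_one _ hl)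
      have hchain : (⟨j, a⟩ :: w.toList).IsChain fun l l' => l.1 ≠ l'.1 :=
        w.chain_ne.cons fun l hl => CoprodI.Word.fstIdx_ne_iff.mp hmw l hl
      have hxr : x ∉ (φ i).range := fun hr => hx x hr (IsConj.refl x)
      have hne := conj_prod_ne_of hφ hT hchain (List.cons_ne_nil _ _) (by simpa using hji) hxr y
      rw [List.map_cons, List.prod_cons, ← hw_prod] at hne
      exact absurd h hne
  | base c w _ ih =>
    rw [NormalWord.prod_smul, ← of_apply_eq_base φ i] at h
    exact isConj_of_conj_of_mul_eq (fun _ _ => ih) _ hx h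

end Monoid.PushoutI

theorem amalgam_conjugacy_free_factor_general {C : Type*} [Group C]
    {G : Bool → Type*} [∀ i, Group (G i)]
    (φ : ∀ i, C →* G i) (hφ : ∀ i, Function.Injective (φ i))
    (x y : G true)
    (hx : ∀ c ∈ (φ true).range, ¬ IsConj x c)
    (h : IsConj (Monoid.PushoutI.of (φ := φ) true x)
                (Monoid.PushoutI.of (φ := φ) true y)) :
    IsConj x y := by
  classical
  obtain ⟨d⟩ := Monoid.PushoutI.NormalWord.transversal_nonempty φ hφ
  obtain ⟨g, hg⟩ := isConj_iff.mp h
  refine Monoid.PushoutI.isConj_of_conj_normalWord_prod_eq hφ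
    (Monoid.PushoutI.NormalWord.equiv (d := d) g⁻¹) hx ?_
  simp [Monoid.PushoutI.NormalWord.equiv, hg]

/-- Conjugacy theorem for amalgamated products, specialized to a free group
factor: if `x, y` lie in a free group `F = G true`, are conjugate in the
amalgamated product `G true *_C G false` over a cyclic subgroup `C`, and
neither is conjugate in `F` into `C`, then `x` and `y` are conjugate in `F`. -/
theorem amalgam_conjugacy_free_factor {C : Type*} [Group C] [IsCyclic C]
    {G : Bool → Type*} [∀ i, Group (G i)] [IsFreeGroup (G true)]
    (φ : ∀ i, C →* G i) (hφ : ∀ i, Function.Injective (φ i))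
    (x y : G true)
    (hx : ∀ c ∈ (φ true).range, ¬ IsConj x c)
    (hy : ∀ c ∈ (φ true).range, ¬ IsConj y c)
    (h : IsConj (Monoid.PushoutI.of (φ := φ) true x)
                (Monoid.PushoutI.of (φ := φ) true y)) :
    IsConj x y :=
  amalgam_conjugacy_free_factor_general φ hφ x y hx h
end

section
/- Let F(a,b) be the free group on two generators and Γ = F(a,b) *_{⟨c⟩} H an amalgamated product where c = [a,b] and H is any group containing an element identified with c. Then for m = 2n ≥ 2, the elements W_σ = a b^{σ(1)} a ⋯ a b^{σ(m)} a (σ ∈ S_m) are pairwise non-conjugate in Γ. -/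
/-- The two-element family `{F(a,b), H}` to be amalgamated. -/
def AmalgamFam (H : Type) : Bool → Type
  | true => FreeGroup (Fin 2)
  | false => H

instance (H : Type) [Group H] : ∀ i, Group (AmalgamFam H i)
  | true => inferInstanceAs (Group (FreeGroup (Fin 2)))
  | false => ‹Group H›

/-- The commutator `c = [a,b]` in `F(a,b)`. -/
def commAB : FreeGroup (Fin 2) :=
  FreeGroup.of 0 * FreeGroup.of 1 * (FreeGroup.of 0)⁻¹ * (FreeGroup.of 1)⁻¹

/-- The amalgamating maps `⟨c⟩ → F(a,b)` and `⟨c⟩ → H`. -/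
def amalgamMaps (H : Type) [Group H] (f : (Subgroup.zpowers commAB) →* H) :
    ∀ i, (Subgroup.zpowers commAB) →* AmalgamFam H i
  | true => (Subgroup.zpowers commAB).subtype
  | false => f

/-!
Conjugacy in `Γ`: write the conjugator in reduced form `h · g₁ ⋯ g_r`. Leading letters from the
factor `G t` of `u` are absorbed into the conjugacy. Otherwise, after absorbing a trailing letter
from `G t` into `u` (which keeps it outside the image of the amalgamated subgroup, as no
conjugate of `u` lies there), `g u g⁻¹ v⁻¹` is a nonempty reduced word, hence nontrivial. The
words `W_σ` have `a`-exponent sum `m + 1 ≠ 0` and `c` has `a`-exponent sum `0`, so no conjugate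
of `W_σ` lies in `⟨c⟩`, and conjugacy in `Γ` reduces to conjugacy in `F(a,b)`.

In `F(a,b)`, map to the wreath product `ℤ ≀ ℤ/(m+1)`, sending `a` to the generator of `ℤ/(m+1)`
and `b` to the unit lamp at `0`. There `W_k` is a pure lamp configuration with `k i` at
position `i` and nothing at position `m` (up to the shift by `m`), and conjugation only rotates
configurations. When all `k i ≠ 0` exactly one position is empty, so the rotation is trivial
and `k` is recovered.
-/

open Function Equiv

namespace Monoid.PushoutI

variable {ι : Type*} {G : ι → Type*} [∀ i, Group (G i)] {H : Type*} [Group H]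
  {φ : ∀ i, H →* G i}

variable (φ) in
def listProd (L : List (Σ i, G i)) : PushoutI φ :=
  (L.map fun p => of p.1 p.2).prod

def invRev (L : List (Σ i, G i)) : List (Σ i, G i) :=
  L.reverse.map fun p => ⟨p.1, p.2⁻¹⟩

variable (φ) in
def IsReducedList (L : List (Σ i, G i)) : Prop :=
  L.IsChain (fun p q => p.1 ≠ q.1) ∧ ∀ p ∈ L, p.2 ∉ (φ p.1).range

@[simp]
lemma listProd_nil : listProd φ [] = 1 := rfl

@[simp]
lemma listProd_cons (p : Σ i, G i) (L : List (Σ i, G i)) :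
    listProd φ (p :: L) = of p.1 p.2 * listProd φ L :=
  List.prod_cons

@[simp]
lemma listProd_append (L₁ L₂ : List (Σ i, G i)) :
    listProd φ (L₁ ++ L₂) = listProd φ L₁ * listProd φ L₂ := by
  simp [listProd]

@[simp]
lemma listProd_invRev (L : List (Σ i, G i)) : listProd φ (invRev L) = (listProd φ L)⁻¹ := by
  induction L with
  | nil => simp [invRev]
  | cons p L ih => simp_all [invRev]

@[simp]
lemma head?_invRev (L : List (Σ i, G i)) :
    (invRev L).head? = L.getLast?.map fun p => ⟨p.1, p.2⁻¹⟩ := by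
  simp [invRev, List.head?_reverse]

@[simp]
lemma getLast?_invRev (L : List (Σ i, G i)) :
    (invRev L).getLast? = L.head?.map fun p => ⟨p.1, p.2⁻¹⟩ := by
  simp [invRev, List.getLast?_reverse]

lemma isReducedList_singleton {i : ι} {x : G i} :
    IsReducedList φ [⟨i, x⟩] ↔ x ∉ (φ i).range := by
  simp [IsReducedList]

lemma isReducedList_append {L₁ L₂ : List (Σ i, G i)} :
    IsReducedList φ (L₁ ++ L₂) ↔ IsReducedList φ L₁ ∧ IsReducedList φ L₂ ∧
      ∀ p ∈ L₁.getLast?, ∀ q ∈ L₂.head?, p.1 ≠ q.1 := by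
  simp only [IsReducedList, List.isChain_append, List.mem_append, or_imp, forall_and]
  tauto

lemma IsReducedList.append {L₁ L₂ : List (Σ i, G i)} (h₁ : IsReducedList φ L₁)
    (h₂ : IsReducedList φ L₂) (h : ∀ p ∈ L₁.getLast?, ∀ q ∈ L₂.head?, p.1 ≠ q.1) :
    IsReducedList φ (L₁ ++ L₂) :=
  isReducedList_append.2 ⟨h₁, h₂, h⟩

lemma IsReducedList.of_cons {p : Σ i, G i} {L : List (Σ i, G i)}
    (hL : IsReducedList φ (p :: L)) : IsReducedList φ L :=
  ⟨hL.1.tail, fun q hq => hL.2 q (List.mem_cons_of_mem p hq)⟩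

lemma IsReducedList.invRev {L : List (Σ i, G i)} (hL : IsReducedList φ L) :
    IsReducedList φ (invRev L) := by
  refine ⟨?_, ?_⟩
  · rw [PushoutI.invRev, List.isChain_map, List.isChain_reverse]
    exact hL.1.imp fun _ _ h => h.symm
  · simp only [PushoutI.invRev, List.mem_map, List.mem_reverse]
    rintro _ ⟨p, hp, rfl⟩ hr
    exact hL.2 p hp (inv_mem_iff.1 hr)

lemma IsReducedList.listProd_notMem_range_base (hφ : ∀ i, Injective (φ i))
    {L : List (Σ i, G i)} (hL : IsReducedList φ L) (hne : L ≠ []) :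
    listProd φ L ∉ (base φ).range := by
  intro hmem
  let w : CoprodI.Word G := ⟨L, fun p hp h1 => hL.2 p hp (h1 ▸ one_mem _), hL.1⟩
  have hw : w = .empty := Reduced.eq_empty_of_mem_range hφ hL.2 (by
    simpa [CoprodI.Word.prod, listProd, map_list_prod, Function.comp_def] using hmem)
  exact hne (congrArg CoprodI.Word.toList hw)

lemma IsReducedList.listProd_notMem_range_of (hφ : ∀ i, Injective (φ i)) {t : ι}
    {L : List (Σ i, G i)} (hL : IsReducedList φ L) (hne : L ≠ [])
    (hlast : ∀ p ∈ L.getLast?, p.1 ≠ t) : listProd φ L ∉ (of (φ := φ) t).range := by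
  rintro ⟨v, hv⟩
  by_cases hv' : v ∈ (φ t).range
  · obtain ⟨h, rfl⟩ := hv'
    exact hL.listProd_notMem_range_base hφ hne ⟨h, by rw [← hv, of_apply_eq_base]⟩
  · have hred : IsReducedList φ (L ++ [⟨t, v⁻¹⟩]) :=
      hL.append (isReducedList_singleton.2 fun hr => hv' (inv_mem_iff.1 hr))
        (by simpa using hlast)
    refine hred.listProd_notMem_range_base hφ (by simp) ⟨1, ?_⟩
    simp [← hv]

lemma IsReducedList.listProd_mul_of_mul_inv_notMem_range_of (hφ : ∀ i, Injective (φ i))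
    {t : ι} {L : List (Σ i, G i)} (hL : IsReducedList φ L) (hne : L ≠ [])
    (hhead : ∀ p ∈ L.head?, p.1 ≠ t) (hlast : ∀ p ∈ L.getLast?, p.1 ≠ t)
    {x : G t} (hx : x ∉ (φ t).range) :
    listProd φ L * of t x * (listProd φ L)⁻¹ ∉ (of (φ := φ) t).range := by
  have hred : IsReducedList φ (L ++ ([⟨t, x⟩] ++ PushoutI.invRev L)) := by
    refine hL.append ((isReducedList_singleton.2 hx).append hL.invRev ?_) ?_
    · simp only [List.getLast?_singleton, Option.mem_def, Option.some.injEq, forall_eq']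
      intro q hq
      rw [head?_invRev] at hq
      obtain ⟨p, hp, rfl⟩ := Option.mem_map.1 hq
      exact (hlast p hp).symm
    · simpa using hlast
  have hlast' : ∀ p ∈ (L ++ ([(⟨t, x⟩ : Σ i, G i)] ++ PushoutI.invRev L)).getLast?,
      p.1 ≠ t := by
    have hne' : PushoutI.invRev L ≠ [] := by simpa [PushoutI.invRev] using hne
    rw [List.getLast?_append_of_ne_nil _ (by simp), List.getLast?_append_of_ne_nil _ hne',
      getLast?_invRev]
    intro q hq
    obtain ⟨p, hp, rfl⟩ := Option.mem_map.1 hq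
    exact hhead p hp
  simpa [mul_assoc] using hred.listProd_notMem_range_of hφ (by simp) hlast'

lemma IsReducedList.listProd_conj_notMem_range_of (hφ : ∀ i, Injective (φ i)) {t : ι}
    {u : G t} (hu : ∀ h, ¬IsConj u (φ t h)) {L : List (Σ i, G i)} (hL : IsReducedList φ L)
    (hne : L ≠ []) (hhead : ∀ p ∈ L.head?, p.1 ≠ t) :
    listProd φ L * of t u * (listProd φ L)⁻¹ ∉ (of (φ := φ) t).range := by
  obtain ⟨L₀, ⟨i, g⟩, rfl⟩ := (List.eq_nil_or_concat' L).resolve_left hne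
  by_cases hi : i = t
  · subst hi
    obtain ⟨hL₀, -, hlast⟩ := isReducedList_append.1 hL
    have hne₀ : L₀ ≠ [] := by
      rintro rfl
      exact hhead _ rfl rfl
    have hconj : g * u * g⁻¹ ∉ (φ i).range := fun ⟨h, hh⟩ => hu h (isConj_iff.2 ⟨g, hh.symm⟩)
    have := hL₀.listProd_mul_of_mul_inv_notMem_range_of hφ hne₀
      (by rwa [← List.head?_append_of_ne_nil _ hne₀]) (fun p hp => hlast p hp _ rfl) hconj
    simpa [mul_assoc] using this
  · refine hL.listProd_mul_of_mul_inv_notMem_range_of hφ hne hhead (by simpa using hi) ?_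
    exact fun ⟨h, hh⟩ => hu h (hh ▸ IsConj.refl _)

lemma IsReducedList.isConj_of_conj_eq (hφ : ∀ i, Injective (φ i)) {t : ι}
    {u : G t} (hu : ∀ h, ¬IsConj u (φ t h)) {L : List (Σ i, G i)} (hL : IsReducedList φ L)
    {v : G t} (h : listProd φ L * of t u * (listProd φ L)⁻¹ = of t v) : IsConj u v := by
  induction L generalizing v with
  | nil =>
    simp only [listProd_nil, one_mul, inv_one, mul_one] at h
    exact of_injective hφ t h ▸ IsConj.refl u
  | cons p L ih =>
    obtain ⟨i, x⟩ := p
    by_cases hi : i = t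
    · subst hi
      refine (ih hL.of_cons (v := x⁻¹ * v * x) ?_).trans (isConj_iff.2 ⟨x, by group⟩)
      simp only [map_mul, map_inv, ← h, listProd_cons, mul_inv_rev]
      group
    · exact absurd ⟨v, h.symm⟩
        (hL.listProd_conj_notMem_range_of hφ hu (by simp) (by simpa using hi))

lemma NormalWord.Transversal.eq_one_of_mem_set_of_mem_range (d : NormalWord.Transversal φ)
    {i : ι} {x : G i} (hx : x ∈ d.set i) (hr : x ∈ (φ i).range) : x = 1 := by
  have h1 := (d.compl i).equiv_snd_eq_self_of_mem_of_one_mem (Subgroup.one_mem _) hx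
  have h2 := (d.compl i).equiv_snd_eq_one_of_mem_of_one_mem (d.one_mem i) hr
  simpa using congrArg Subtype.val (h1.symm.trans h2)

lemma exists_base_mul_listProd (hφ : ∀ i, Injective (φ i)) (g : PushoutI φ) :
    ∃ h L, IsReducedList φ L ∧ base φ h * listProd φ L = g := by
  classical
  obtain ⟨d⟩ := NormalWord.transversal_nonempty φ hφ
  let w : NormalWord d := NormalWord.equiv g
  refine ⟨w.head, w.toList, ⟨w.chain_ne, fun p hp hr => w.ne_one p hp
    (d.eq_one_of_mem_set_of_mem_range (w.normalized p.1 p.2 hp) hr)⟩, ?_⟩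
  have hw : w.prod = g := NormalWord.equiv.symm_apply_apply g
  rw [← hw, NormalWord.prod, CoprodI.Word.prod, map_list_prod, List.map_map]
  rfl

theorem isConj_of_isConj_of (hφ : ∀ i, Injective (φ i)) {t : ι} {u v : G t}
    (hu : ∀ h, ¬IsConj u (φ t h)) (h : IsConj (of (φ := φ) t u) (of t v)) : IsConj u v := by
  obtain ⟨g, hg⟩ := isConj_iff.1 h
  obtain ⟨b, L, hL, rfl⟩ := exists_base_mul_listProd hφ g
  refine (hL.isConj_of_conj_eq hφ hu (v := (φ t b)⁻¹ * v * φ t b) ?_).trans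
    (isConj_iff.2 ⟨φ t b, by group⟩)
  rw [map_mul, map_mul, map_inv, of_apply_eq_base, ← hg]
  group

end Monoid.PushoutI

section Lamplighter

variable {A : Type*} [AddGroup A]

/-- The element `(F, s)` of the wreath product `ℤ ≀ A`, acting on `A × ℤ`. -/
def lampPerm (s : A) (F : A → ℤ) : Perm (A × ℤ) where
  toFun p := (p.1 + s, p.2 + F p.1)
  invFun p := (p.1 - s, p.2 - F (p.1 - s))
  left_inv p := by simp
  right_inv p := by simp

@[simp]
lemma lampPerm_apply (s : A) (F : A → ℤ) (p : A × ℤ) :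
    lampPerm s F p = (p.1 + s, p.2 + F p.1) := rfl

lemma lampPerm_mul (s t : A) (F G : A → ℤ) :
    lampPerm s F * lampPerm t G = lampPerm (t + s) (fun x => G x + F (x + t)) := by
  ext p <;> simp [add_assoc]

lemma lampPerm_zero : lampPerm (0 : A) 0 = 1 := by
  ext p <;> simp

lemma lampPerm_zero_pow (F : A → ℤ) (k : ℕ) : lampPerm (0 : A) F ^ k = lampPerm 0 (k • F) := by
  induction k with
  | zero => simp [lampPerm_zero]
  | succ k ih =>
    rw [pow_succ, ih, lampPerm_mul]
    congr 1 <;> simp [funext_iff, add_smul, add_comm]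

lemma lampPerm_inv (s : A) (F : A → ℤ) :
    (lampPerm s F)⁻¹ = lampPerm (-s) (fun x => -F (x - s)) := by
  refine inv_eq_of_mul_eq_one_right ?_
  rw [lampPerm_mul, ← lampPerm_zero]
  congr 1 <;> simp [funext_iff, sub_eq_add_neg]

lemma eq_of_lampPerm_eq {s t : A} {F G : A → ℤ} (h : lampPerm s F = lampPerm t G) :
    s = t ∧ F = G := by
  have h' x := congrArg (· (x, 0)) h
  simp only [lampPerm_apply, Prod.mk.injEq, zero_add, add_right_inj] at h'
  exact ⟨(h' 0).1, funext fun x => (h' x).2⟩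

lemma lampPerm_conj_lampPerm_zero (s : A) (F κ : A → ℤ) :
    lampPerm s F * lampPerm 0 κ * (lampPerm s F)⁻¹ = lampPerm 0 (fun x => κ (x - s)) := by
  rw [mul_inv_eq_iff_eq_mul, lampPerm_mul, lampPerm_mul]
  congr 1 <;> simp [add_comm]

variable (A) in
def lampSubgroup : Subgroup (Perm (A × ℤ)) where
  carrier := {p | ∃ s F, lampPerm s F = p}
  one_mem' := ⟨0, 0, lampPerm_zero⟩
  mul_mem' := by
    rintro _ _ ⟨s, F, rfl⟩ ⟨t, G, rfl⟩
    exact ⟨_, _, (lampPerm_mul s t F G).symm⟩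
  inv_mem' := by
    rintro _ ⟨s, F, rfl⟩
    exact ⟨_, _, (lampPerm_inv s F).symm⟩

end Lamplighter

section Words

variable {m N : ℕ}

def abWord (k : Fin m → ℕ) : FreeGroup (Fin 2) :=
  FreeGroup.of 0 * (List.ofFn fun i => FreeGroup.of 1 ^ k i * FreeGroup.of 0).prod

def exponentSumA : FreeGroup (Fin 2) →* Multiplicative ℤ :=
  FreeGroup.lift ![Multiplicative.ofAdd 1, 1]

lemma exponentSumA_abWord (k : Fin m → ℕ) : (exponentSumA (abWord k)).toAdd = m + 1 := by
  simp [abWord, exponentSumA, map_list_prod, List.map_ofFn, Function.comp_def, add_comm]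

lemma exponentSumA_commAB : exponentSumA commAB = 1 := by
  simp [commAB, exponentSumA]

lemma abWord_not_isConj_zpow_commAB (k : Fin m → ℕ) (j : ℤ) :
    ¬IsConj (abWord k) (commAB ^ j) := by
  intro h
  have := congrArg Multiplicative.toAdd (isConj_iff_eq.1 (exponentSumA.map_isConj h))
  rw [exponentSumA_abWord, map_zpow, exponentSumA_commAB, one_zpow, toAdd_one] at this
  omega

def lampRep (N : ℕ) : FreeGroup (Fin 2) →* Perm (ZMod N × ℤ) :=
  FreeGroup.lift ![lampPerm 1 0, lampPerm 0 (Pi.single 0 1)]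

lemma lampRep_mem_lampSubgroup (g : FreeGroup (Fin 2)) :
    lampRep N g ∈ lampSubgroup (ZMod N) := by
  refine FreeGroup.range_lift_le ?_ ⟨g, rfl⟩
  rintro _ ⟨i, rfl⟩
  fin_cases i
  exacts [⟨_, _, rfl⟩, ⟨_, _, rfl⟩]

def abProfile (k : Fin m → ℕ) (y : ZMod N) : ℤ :=
  ∑ i : Fin m, if y = i then (k i : ℤ) else 0

lemma lampRep_prod_ofFn (k : Fin m → ℕ) :
    lampRep N (List.ofFn fun i => FreeGroup.of 1 ^ k i * FreeGroup.of 0).prod =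
      lampPerm (m : ZMod N) (fun x => abProfile k (x + (m : ZMod N))) := by
  induction m with
  | zero => simp [← lampPerm_zero, Pi.zero_def, abProfile]
  | succ m ih =>
    rw [List.ofFn_succ, List.prod_cons, map_mul, ih, map_mul, map_pow]
    simp only [lampRep, FreeGroup.lift_apply_of, Matrix.cons_val_zero, Matrix.cons_val_one,
      lampPerm_zero_pow, lampPerm_mul]
    congr 1
    · push_cast
      ring
    · funext x
      simp only [abProfile, Fin.sum_univ_succ]
      rw [add_comm]
      congr 1
      · simp [Pi.single_apply, add_assoc]
      · refine Finset.sum_congr rfl fun i _ => ?_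
        simp only [Fin.val_succ, Nat.cast_add, Nat.cast_one, ← add_assoc, add_left_inj]

lemma lampRep_abWord (k : Fin m → ℕ) :
    lampRep (m + 1) (abWord k) = lampPerm 0 (fun x => abProfile k (x + (m : ZMod (m + 1)))) := by
  rw [abWord, map_mul, lampRep_prod_ofFn]
  simp only [lampRep, FreeGroup.lift_apply_of, Matrix.cons_val_zero, lampPerm_mul]
  congr 1
  · exact_mod_cast ZMod.natCast_self (m + 1)
  · simp

lemma ZMod.natCast_inj_of_lt {a b : ℕ} (ha : a < N) (hb : b < N) :
    (a : ZMod N) = b ↔ a = b :=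
  ⟨fun h => by simpa [val_natCast_of_lt ha, val_natCast_of_lt hb] using congrArg val h,
    congrArg _⟩

lemma abProfile_natCast (k : Fin m → ℕ) (i : Fin m) :
    abProfile k ((i : ℕ) : ZMod (m + 1)) = k i := by
  rw [abProfile, Finset.sum_eq_single i]
  · simp
  · intro j _ hji
    rw [if_neg fun h => hji (Fin.ext ((ZMod.natCast_inj_of_lt (by omega) (by omega)).1 h).symm)]
  · simp

lemma abProfile_natCast_self (k : Fin m → ℕ) : abProfile k (m : ZMod (m + 1)) = 0 :=
  Finset.sum_eq_zero fun i _ => if_neg fun h => by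
    have := (ZMod.natCast_inj_of_lt (by omega) (by omega)).1 h
    omega

lemma abProfile_ne_zero {k : Fin m → ℕ} (hk : ∀ i, k i ≠ 0) {y : ZMod (m + 1)}
    (hy : y ≠ m) : abProfile k y ≠ 0 := by
  have hlt : y.val < m := by
    refine lt_of_le_of_ne (Nat.lt_succ_iff.1 (ZMod.val_lt y)) fun h => hy ?_
    rw [← ZMod.natCast_zmod_val y, h]
  rw [← ZMod.natCast_zmod_val y, abProfile_natCast k ⟨y.val, hlt⟩]
  exact_mod_cast hk _

theorem eq_of_isConj_abWord {k l : Fin m → ℕ} (hk : ∀ i, k i ≠ 0)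
    (h : IsConj (abWord k) (abWord l)) : k = l := by
  obtain ⟨g, hg⟩ := isConj_iff.1 h
  obtain ⟨s, F, hsF⟩ := lampRep_mem_lampSubgroup (N := m + 1) g
  have hprofile : ∀ y, abProfile k (y - s) = abProfile l y := by
    have := congrArg (lampRep (m + 1)) hg
    rw [map_mul, map_mul, map_inv, ← hsF, lampRep_abWord, lampRep_abWord,
      lampPerm_conj_lampPerm_zero] at this
    intro y
    simpa [sub_add_eq_add_sub] using congrFun (eq_of_lampPerm_eq this).2 (y - m)
  have hs : s = 0 := by
    by_contra hs
    refine abProfile_ne_zero hk (y := m - s) (by simpa using hs) ?_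
    rw [hprofile, abProfile_natCast_self]
  funext i
  have := hprofile i
  rw [hs, sub_zero, abProfile_natCast, abProfile_natCast] at this
  exact_mod_cast this

end Words

theorem W_sigma_nonconjugate_in_amalgam_general (H : Type) [Group H]
    (f : (Subgroup.zpowers commAB) →* H) (hf : Function.Injective f)
    (m : ℕ) (σ τ : Equiv.Perm (Fin m))
    (a b : FreeGroup (Fin 2)) (ha : a = FreeGroup.of 0) (hb : b = FreeGroup.of 1)
    (h : IsConj
      (Monoid.PushoutI.of (φ := amalgamMaps H f) true
        (show AmalgamFam H true from
          a * (List.ofFn fun i => b ^ ((σ i : ℕ) + 1) * a).prod))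
      (Monoid.PushoutI.of (φ := amalgamMaps H f) true
        (show AmalgamFam H true from
          a * (List.ofFn fun i => b ^ ((τ i : ℕ) + 1) * a).prod))) :
    σ = τ := by
  subst ha hb
  have hφ : ∀ i, Injective (amalgamMaps H f i) := by
    rintro (_ | _)
    exacts [hf, Subtype.coe_injective]
  have hW : IsConj (abWord fun i => (σ i : ℕ) + 1) (abWord fun i => (τ i : ℕ) + 1) :=
    Monoid.PushoutI.isConj_of_isConj_of hφ
      (fun ⟨_, j, rfl⟩ => abWord_not_isConj_zpow_commAB _ j) h
  ext i
  simpa using congrFun (eq_of_isConj_abWord (fun _ => Nat.succ_ne_zero _) hW) i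

/-- In the amalgamated product `Γ = F(a,b) *_{⟨c⟩} H`, where `c = [a,b]`, the
words `W_σ = a b^{σ(1)} a ⋯ a b^{σ(m)} a` for `σ ∈ S_m`, `m = 2n ≥ 2`, are
pairwise non-conjugate. -/
theorem W_sigma_nonconjugate_in_amalgam (H : Type) [Group H]
    (f : (Subgroup.zpowers commAB) →* H) (hf : Function.Injective f)
    (n m : ℕ) (hn : 1 ≤ n) (hm : m = 2 * n) (σ τ : Equiv.Perm (Fin m))
    (a b : FreeGroup (Fin 2)) (ha : a = FreeGroup.of 0) (hb : b = FreeGroup.of 1)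
    (h : IsConj
      (Monoid.PushoutI.of (φ := amalgamMaps H f) true
        (show AmalgamFam H true from
          a * (List.ofFn fun i => b ^ ((σ i : ℕ) + 1) * a).prod))
      (Monoid.PushoutI.of (φ := amalgamMaps H f) true
        (show AmalgamFam H true from
          a * (List.ofFn fun i => b ^ ((τ i : ℕ) + 1) * a).prod))) :
    σ = τ :=
  W_sigma_nonconjugate_in_amalgam_general H f hf m σ τ a b ha hb h
end

section
/- For every n ≥ 1 and every field K of characteristic zero, the linear map tr : K[Conj(F(a,b))] → (functions from Hom(F(a,b), GL_n(K)) to K), sending a conjugacy class [γ] to the function ρ ↦ tr(ρ(γ)), is not injective. -/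
/-!
The trace of `ρ(w)` for a positive word `w` of length `≤ L` in `a, b` is a polynomial of total
degree `≤ L` in the `2n²` entries of `ρ(a), ρ(b)`, so these trace functions span a space of
dimension at most `(L + 1)^(2n²)`. The words `∏_{j<k} b^{e_S(j)} a`, one for each `S ⊆ ℤ/k`,
where `e_S(p) = k + 1 + p` for `p ∈ S` and `1` otherwise, have length at most `k(2k + 1)` and
are pairwise non-conjugate: in the permutation action of `ℤ/m ≀ ℤ/k` with `m = k + 1 + q` the
word of `S` translates the fibre over `p` by `e_S(p)`, so it fixes a whole fibre exactly when
`q ∈ S`. For large `k` there are more than `(k(2k + 1) + 1)^(2n²)` such classes, so their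
trace functions are linearly dependent.
-/

def classTrace {K : Type*} [Field K] {n : ℕ}
    (ρ : FreeGroup (Fin 2) →* Matrix.GeneralLinearGroup (Fin n) K) :
    ConjClasses (FreeGroup (Fin 2)) → K :=
  Quotient.lift (fun g => Matrix.trace ((ρ g : Matrix (Fin n) (Fin n) K))) (by
    intro x y hxy
    obtain ⟨z, hz⟩ := isConj_iff.mp hxy
    subst hz
    simp only [map_mul, map_inv, Units.val_mul]
    exact (Matrix.trace_units_conj (ρ z) (ρ x : Matrix (Fin n) (Fin n) K)).symm ▸ rfl)

open MvPolynomial Module Filter Matrix Equiv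

namespace GoldmanTrace

section GenericMatrix

variable {α m R : Type*} [Fintype m] [DecidableEq m] [CommRing R]

variable (m R) in
noncomputable def genericMatrix (a : α) : Matrix m m (MvPolynomial (α × m × m) R) :=
  Matrix.of fun i j => X (a, i, j)

theorem totalDegree_list_prod_genericMatrix_apply_le (l : List α) (i j : m) :
    ((l.map (genericMatrix m R)).prod i j).totalDegree ≤ l.length := by
  induction l generalizing i j with
  | nil =>
    rw [List.map_nil, List.prod_nil, one_apply]
    split_ifs <;> simp
  | cons a l ih =>
    rw [List.map_cons, List.prod_cons, mul_apply, List.length_cons]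
    refine (totalDegree_finsetSum _ _).trans (Finset.sup_le fun c _ => ?_)
    refine (totalDegree_mul _ _).trans ?_
    have : (X (a, i, c) : MvPolynomial (α × m × m) R).totalDegree ≤ 1 :=
      (totalDegree_monomial_le _ _).trans_eq (by simp)
    rw [genericMatrix, of_apply]
    have := ih c j
    omega

theorem totalDegree_trace_list_prod_genericMatrix_le (l : List α) :
    (trace (l.map (genericMatrix m R)).prod).totalDegree ≤ l.length :=
  (totalDegree_finsetSum _ _).trans
    (Finset.sup_le fun i _ => totalDegree_list_prod_genericMatrix_apply_le l i i)

theorem aeval_trace_list_prod_genericMatrix (M : α → Matrix m m R) (l : List α) :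
    aeval (fun v : α × m × m => M v.1 v.2.1 v.2.2) (trace (l.map (genericMatrix m R)).prod)
      = trace (l.map M).prod := by
  rw [AddMonoidHom.map_trace, ← AlgHom.mapMatrix_apply, map_list_prod, List.map_map]
  congr 3 with a i j
  simp [genericMatrix]

end GenericMatrix

section Dimension

variable {K : Type*} [Field K]

theorem finrank_restrictDegree_le {σ : Type*} [Fintype σ] (L : ℕ) :
    finrank K (restrictDegree σ K L) ≤ (L + 1) ^ Fintype.card σ := by
  classical
  let mono : (σ → Fin (L + 1)) → MvPolynomial σ K :=
    fun e => monomial (Finsupp.equivFunOnFinite.symm fun i => (e i : ℕ)) 1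
  have hle : restrictDegree σ K L ≤ Submodule.span K (Set.range mono) := by
    rw [restrictDegree, restrictSupport_eq_span]
    refine Submodule.span_mono ?_
    rintro _ ⟨s, hs, rfl⟩
    refine ⟨fun i => ⟨s i, Nat.lt_succ_of_le (hs i)⟩, ?_⟩
    simp [mono]
  have : Module.Finite K (Submodule.span K (Set.range mono)) :=
    Module.Finite.span_of_finite K (Set.finite_range mono)
  calc finrank K (restrictDegree σ K L)
      ≤ finrank K (Submodule.span K (Set.range mono)) := Submodule.finrank_mono hle
    _ ≤ Fintype.card (σ → Fin (L + 1)) := finrank_range_le_card mono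
    _ = (L + 1) ^ Fintype.card σ := by simp

variable {α m : Type*} [Fintype m] [DecidableEq m]

variable (K α m) in
noncomputable def evalAtRepresentations :
    MvPolynomial (α × m × m) K →ₗ[K] ((FreeGroup α →* GeneralLinearGroup m K) → K) :=
  LinearMap.pi fun ρ =>
    (aeval fun v : α × m × m => (ρ (FreeGroup.of v.1) : Matrix m m K) v.2.1 v.2.2).toLinearMap

theorem evalAtRepresentations_trace_list_prod_genericMatrix (l : List α) :
    evalAtRepresentations K α m (trace (l.map (genericMatrix m K)).prod)
      = fun ρ => trace (ρ (l.map FreeGroup.of).prod : Matrix m m K) := by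
  funext ρ
  have hprod : (ρ (l.map FreeGroup.of).prod : Matrix m m K)
      = (l.map fun a => (ρ (FreeGroup.of a) : Matrix m m K)).prod := by
    rw [← Units.coeHom_apply, ← MonoidHom.comp_apply, map_list_prod, List.map_map]
    rfl
  rw [hprod]
  exact aeval_trace_list_prod_genericMatrix (fun a => (ρ (FreeGroup.of a) : Matrix m m K)) l

theorem card_le_of_linearIndependent_trace [Fintype α] {ι : Type*} [Fintype ι]
    (w : ι → List α) {L : ℕ} (hw : ∀ i, (w i).length ≤ L)
    (hli : LinearIndependent K fun i (ρ : FreeGroup α →* GeneralLinearGroup m K) =>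
      trace (ρ ((w i).map FreeGroup.of).prod : Matrix m m K)) :
    Fintype.card ι ≤ (L + 1) ^ (Fintype.card α * (Fintype.card m * Fintype.card m)) := by
  set W := (restrictDegree (α × m × m) K L).map (evalAtRepresentations K α m)
  have hmem : ∀ i, (fun ρ : FreeGroup α →* GeneralLinearGroup m K =>
      trace (ρ ((w i).map FreeGroup.of).prod : Matrix m m K)) ∈ W := fun i =>
    ⟨_, restrictTotalDegree_le_restrictDegree _ _ L ((mem_restrictTotalDegree _ _ _).2
      ((totalDegree_trace_list_prod_genericMatrix_le (w i)).trans (hw i))),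
      evalAtRepresentations_trace_list_prod_genericMatrix (w i)⟩
  calc Fintype.card ι
      = finrank K (Submodule.span K (Set.range _)) := (finrank_span_eq_card hli).symm
    _ ≤ finrank K W :=
      Submodule.finrank_mono (Submodule.span_le.2 (Set.range_subset_iff.2 hmem))
    _ ≤ finrank K (restrictDegree (α × m × m) K L) := Submodule.finrank_map_le _ _
    _ ≤ _ := (finrank_restrictDegree_le L).trans_eq (by rw [Fintype.card_prod, Fintype.card_prod])

end Dimension

section LampRepresentation

variable (k m : ℕ)

def rotatePerm : Perm (ZMod k × ZMod m) := (Equiv.addRight 1).prodCongr (Equiv.refl _)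

def bumpPerm : Perm (ZMod k × ZMod m) :=
  Equiv.prodShear (Equiv.refl _) fun p => Equiv.addRight (if p = 0 then 1 else 0)

def wreathRep : FreeGroup (Fin 2) →* Perm (ZMod k × ZMod m) :=
  FreeGroup.lift ![rotatePerm k m, bumpPerm k m]

variable {k m}

theorem bumpPerm_pow_apply (t : ℕ) (p : ZMod k) (x : ZMod m) :
    (bumpPerm k m ^ t) (p, x) = (p, x + if p = 0 then (t : ZMod m) else 0) := by
  induction t generalizing x with
  | zero => simp
  | succ t ih =>
    rw [pow_succ', Perm.mul_apply, ih]
    simp only [bumpPerm, Equiv.prodShear_apply, Equiv.refl_apply, Equiv.coe_addRight]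
    split_ifs <;> simp [add_assoc]

theorem wreathRep_pow_mul_apply (t : ℕ) (p : ZMod k) (x : ZMod m) :
    wreathRep k m (FreeGroup.of 1 ^ t * FreeGroup.of 0) (p, x)
      = (p + 1, x + if p + 1 = 0 then (t : ZMod m) else 0) := by
  simp [wreathRep, bumpPerm_pow_apply, rotatePerm]

theorem wreathRep_prod_range_apply (t : ℕ → ℕ) (r : ℕ) (p : ZMod k) (x : ZMod m) :
    wreathRep k m ((List.range r).map fun j => FreeGroup.of 1 ^ t j * FreeGroup.of 0).prod (p, x)
      = (p + r, x + ∑ j ∈ Finset.range r, if p + r = j then (t j : ZMod m) else 0) := by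
  induction r generalizing p x with
  | zero => simp
  | succ r ih =>
    rw [List.range_succ, List.map_append, List.prod_append, map_mul, Perm.mul_apply,
      List.map_singleton, List.prod_singleton, wreathRep_pow_mul_apply, ih, Finset.sum_range_succ]
    have hlast : p + 1 = 0 ↔ p + ↑(r + 1) = (r : ZMod k) := by
      rw [Nat.cast_succ, add_comm (r : ZMod k), ← add_assoc, add_eq_right]
    simp only [hlast, Nat.cast_succ, add_assoc, add_comm (1 : ZMod k)]
    congr 1
    abel

end LampRepresentation

section SubsetWords

variable {k : ℕ}

def subsetExponent (S : Finset (ZMod k)) (p : ZMod k) : ℕ :=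
  if p ∈ S then k + 1 + p.val else 1

def subsetWord (S : Finset (ZMod k)) : List (Fin 2) :=
  (List.range k).flatMap fun j : ℕ => List.replicate (subsetExponent S j) 1 ++ [0]

theorem prod_subsetWord (S : Finset (ZMod k)) :
    ((subsetWord S).map FreeGroup.of).prod
      = ((List.range k).map fun j : ℕ =>
          FreeGroup.of 1 ^ subsetExponent S j * FreeGroup.of 0).prod := by
  simp [subsetWord, List.flatMap_def, List.prod_flatten, List.map_map, Function.comp_def]

variable [NeZero k]

theorem subsetExponent_le (S : Finset (ZMod k)) (p : ZMod k) : subsetExponent S p ≤ 2 * k := by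
  have := p.val_lt
  unfold subsetExponent
  split_ifs <;> omega

theorem length_subsetWord_le (S : Finset (ZMod k)) :
    (subsetWord S).length ≤ k * (2 * k + 1) := by
  rw [subsetWord, List.length_flatMap]
  refine (List.sum_le_card_nsmul _ (2 * k + 1) ?_).trans_eq (by simp)
  simp only [List.mem_map, List.mem_range]
  rintro _ ⟨j, -, rfl⟩
  simpa using subsetExponent_le S j

theorem wreathRep_subsetWord_apply {m : ℕ} (S : Finset (ZMod k)) (p : ZMod k) (x : ZMod m) :
    wreathRep k m ((subsetWord S).map FreeGroup.of).prod (p, x) = (p, x + subsetExponent S p) := by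
  rw [prod_subsetWord, wreathRep_prod_range_apply, ZMod.natCast_self, add_zero,
    Finset.sum_eq_single_of_mem p.val (Finset.mem_range.2 p.val_lt)]
  · simp
  · intro j hj hne
    rw [if_neg]
    rintro rfl
    exact hne (ZMod.val_cast_of_lt (Finset.mem_range.1 hj)).symm

theorem dvd_subsetExponent_iff (S : Finset (ZMod k)) (p q : ZMod k) :
    k + 1 + q.val ∣ subsetExponent S p ↔ p ∈ S ∧ p = q := by
  have hp := p.val_lt
  have hq := q.val_lt
  unfold subsetExponent
  split_ifs with hpS
  · refine ⟨fun h => ⟨hpS, ZMod.val_injective k ?_⟩, fun ⟨_, hpq⟩ => hpq ▸ dvd_rfl⟩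
    have := Nat.eq_of_dvd_of_lt_two_mul (by omega) h (by omega)
    omega
  · simp only [Nat.dvd_one, hpS, false_and, iff_false]
    omega

theorem support_wreathRep_subsetWord (S : Finset (ZMod k)) (q : ZMod k) :
    (wreathRep k (k + 1 + q.val) ((subsetWord S).map FreeGroup.of).prod).support
      = (if q ∈ S then Finset.univ.erase q else Finset.univ) ×ˢ Finset.univ := by
  ext ⟨p, x⟩
  rw [Perm.mem_support, wreathRep_subsetWord_apply]
  simp only [ne_eq, Prod.mk.injEq, true_and, add_eq_left, ZMod.natCast_eq_zero_iff,
    dvd_subsetExponent_iff, Finset.mem_product, Finset.mem_univ, and_true]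
  split_ifs with hq <;> grind

theorem card_support_wreathRep_subsetWord (S : Finset (ZMod k)) (q : ZMod k) :
    (wreathRep k (k + 1 + q.val) ((subsetWord S).map FreeGroup.of).prod).support.card
      = (if q ∈ S then k - 1 else k) * (k + 1 + q.val) := by
  rw [support_wreathRep_subsetWord, Finset.card_product]
  split_ifs <;> simp [Finset.card_univ, ZMod.card]

theorem isConj_prod_subsetWord_iff (S S' : Finset (ZMod k)) :
    IsConj ((subsetWord S).map FreeGroup.of).prod ((subsetWord S').map FreeGroup.of).prod
      ↔ S = S' := by
  refine ⟨fun h => Finset.ext fun q => ?_, fun h => h ▸ IsConj.refl _⟩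
  have hcard := Perm.isConj_iff_cycleType_eq.1 ((wreathRep k (k + 1 + q.val)).map_isConj h)
  replace hcard := congrArg Multiset.sum hcard
  rw [Perm.sum_cycleType, Perm.sum_cycleType, card_support_wreathRep_subsetWord,
    card_support_wreathRep_subsetWord, Nat.mul_left_inj (by omega)] at hcard
  have := NeZero.pos k
  split_ifs at hcard <;> grind

end SubsetWords

theorem eventually_pow_lt_two_pow (q : ℕ) :
    ∀ᶠ k : ℕ in atTop, (k * (2 * k + 1) + 1) ^ q < 2 ^ k := by
  have hlim := (tendsto_pow_const_div_const_pow_of_one_lt (2 * q) one_lt_two).eventually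
    (gt_mem_nhds (show (0 : ℝ) < 1 / 4 ^ q by positivity))
  filter_upwards [hlim, eventually_ge_atTop 1] with k hk hk1
  have hpoly : (k * (2 * k + 1) + 1) ^ q ≤ 4 ^ q * k ^ (2 * q) := by
    rw [pow_mul, ← mul_pow]
    gcongr
    nlinarith
  have hexp : (4 ^ q * k ^ (2 * q) : ℝ) < 2 ^ k := by
    rw [div_lt_div_iff₀ (by positivity) (by positivity)] at hk
    linarith
  exact hpoly.trans_lt (by exact_mod_cast hexp)

end GoldmanTrace

open GoldmanTrace

theorem goldman_trace_not_injective_general {K : Type*} [Field K]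
    (n : ℕ) :
    ¬ Function.Injective
      (fun (x : ConjClasses (FreeGroup (Fin 2)) →₀ K) =>
        fun (ρ : FreeGroup (Fin 2) →* Matrix.GeneralLinearGroup (Fin n) K) =>
          x.sum fun cl coeff => coeff * classTrace ρ cl) := by
  intro hinj
  have hli : LinearIndependent K fun (c : ConjClasses (FreeGroup (Fin 2)))
      (ρ : FreeGroup (Fin 2) →* GeneralLinearGroup (Fin n) K) => classTrace ρ c := by
    rw [LinearIndependent]
    convert hinj using 2 with x
    funext ρ
    simp [Finsupp.linearCombination_apply, Finsupp.sum, mul_comm]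
  obtain ⟨k, hk, hk1⟩ :=
    ((eventually_pow_lt_two_pow (2 * (n * n))).and (eventually_ge_atTop 1)).exists
  have : NeZero k := ⟨by omega⟩
  let cls (S : Finset (ZMod k)) : ConjClasses (FreeGroup (Fin 2)) :=
    ConjClasses.mk ((subsetWord S).map FreeGroup.of).prod
  have hcls : Function.Injective cls := fun S S' h =>
    (isConj_prod_subsetWord_iff S S').1 (ConjClasses.mk_eq_mk_iff_isConj.1 h)
  have hcard := card_le_of_linearIndependent_trace subsetWord length_subsetWord_le
    (hli.comp cls hcls)
  rw [Fintype.card_finset, ZMod.card, Fintype.card_fin, Fintype.card_fin] at hcard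
  omega

/-- The Goldman trace map on the free group `F(a,b)` is not injective: the
linear map from the free `K`-vector space on conjugacy classes of `F(a,b)` to
functions on `Hom(F(a,b), GL_n(K))`, sending `[γ]` to `ρ ↦ tr(ρ(γ))`, has
nontrivial kernel for every `n ≥ 1` and field `K` of characteristic zero. -/
theorem goldman_trace_not_injective {K : Type*} [Field K] [CharZero K]
    (n : ℕ) (hn : 1 ≤ n) :
    ¬ Function.Injective
      (fun (x : ConjClasses (FreeGroup (Fin 2)) →₀ K) =>
        fun (ρ : FreeGroup (Fin 2) →* Matrix.GeneralLinearGroup (Fin n) K) =>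
          x.sum fun cl coeff => coeff * classTrace ρ cl) :=
  goldman_trace_not_injective_general n
end
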